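/- arXiv:math/0109165 — 5 statements merged into one kernel-verified Lean document; each statement's English description precedes it below -/
import Mathlib

section
/- Let V be a finite-dimensional complex vector space, L a symmetric 2n-multilinear form on V, q a symmetric bilinear form on V, and C a complex constant such that L(x, ..., x) = C · q(x,x)^n for all x in V. If h ∈ V satisfies q(h,h) = 0, then for every integer k with n < k ≤ 2n and every a ∈ V, the polarized value L(a, ..., a, h, ..., h) (with a appearing 2n−k times and h appearing k times) equals 0. -/
/-!
Expanding the Fujiki relation at `a + c • h` gives a polynomial identity in `c`. By symmetry of `L`,
the coefficient of `c ^ k` on the left is `(2n choose k)` times the polarized value with `k` copies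
of `h`, while on the right `q (a + c • h) (a + c • h)` is affine in `c` because `q h h = 0`, so the
right-hand side has degree at most `n`.
-/

open Finset Polynomial

namespace MultilinearMap

variable {R M M₂ ι : Type*} [CommSemiring R] [AddCommMonoid M] [Module R M]
  [AddCommMonoid M₂] [Module R M₂] [DecidableEq ι]

theorem apply_piecewise_const_eq_of_card_eq (L : MultilinearMap R (fun _ : ι => M) M₂)
    (hL : ∀ (σ : Equiv.Perm ι) (v : ι → M), L (v ∘ σ) = L v) (x y : M) {s t : Finset ι}
    (hst : #s = #t) :
    L (s.piecewise (fun _ => x) (fun _ => y)) = L (t.piecewise (fun _ => x) (fun _ => y)) := by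
  obtain ⟨σ, rfl⟩ := Equiv.Perm.exists_map_finset_eq s t hst
  rw [← hL σ.symm]
  congr 1
  ext i
  simp [Finset.piecewise, Finset.mem_map_equiv]

theorem apply_piecewise_const_eq_apply_ite {N : ℕ} (L : MultilinearMap R (fun _ : Fin N => M) M₂)
    (hL : ∀ (σ : Equiv.Perm (Fin N)) (v : Fin N → M), L (v ∘ σ) = L v) (x y : M)
    (s : Finset (Fin N)) :
    L (s.piecewise (fun _ => y) (fun _ => x)) = L (fun i => if (i : ℕ) < N - #s then x else y) := by
  have hite : (fun i : Fin N => if (i : ℕ) < N - #s then x else y) =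
      ({i | (i : ℕ) < N - #s} : Finset (Fin N))ᶜ.piecewise (fun _ => y) (fun _ => x) := by
    rw [piecewise_compl]
    ext i
    simp [Finset.piecewise]
  have hcard : #s ≤ N := by simpa using card_le_univ s
  rw [hite]
  refine apply_piecewise_const_eq_of_card_eq L hL y x ?_
  rw [card_compl, Fin.card_filter_val_lt, Fintype.card_fin]
  omega

theorem apply_const_add_smul [Fintype ι] (L : MultilinearMap R (fun _ : ι => M) M₂) (x y : M)
    (F : ℕ → M₂) (hF : ∀ s : Finset ι, L (s.piecewise (fun _ => y) (fun _ => x)) = F #s) (c : R) :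
    L (fun _ => x + c • y) =
      ∑ m ∈ Finset.range (Fintype.card ι + 1), (Fintype.card ι).choose m • c ^ m • F m := by
  have hsplit : (fun _ : ι => x + c • y) = (fun _ => c • y) + fun _ => x := by
    ext
    exact add_comm _ _
  have hterm (s : Finset ι) :
      L (s.piecewise (fun _ => c • y) (fun _ => x)) = c ^ #s • F #s := by
    have : s.piecewise (fun _ => c • y) (fun _ => x) =
        s.piecewise (fun i => c • s.piecewise (fun _ => y) (fun _ => x) i)
          (s.piecewise (fun _ => y) (fun _ => x)) := by
      ext i
      by_cases hi : i ∈ s <;> simp [hi]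
    rw [this, L.map_piecewise_smul, hF, prod_const]
  rw [hsplit, L.map_add_univ, ← powerset_univ]
  simp_rw [hterm]
  rw [sum_powerset_apply_card (fun m => c ^ m • F m), card_univ]

end MultilinearMap

theorem eq_zero_of_sum_mul_pow_eq_mul_linear_pow {R : Type*} [CommRing R] [IsDomain R]
    [Infinite R] {N n k : ℕ} (f : ℕ → R) (c α β : R)
    (hf : ∀ x, ∑ m ∈ range (N + 1), f m * x ^ m = c * (α + β * x) ^ n)
    (hnk : n < k) (hkN : k ≤ N) : f k = 0 := by
  set p : R[X] := ∑ m ∈ range (N + 1), C (f m) * X ^ m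
  have hp : p = C c * (C β * X + C α) ^ n :=
    Polynomial.funext fun x => by simp [p, eval_finsetSum, hf, add_comm]
  have hdeg : (C c * (C β * X + C α) ^ n).natDegree ≤ n :=
    (natDegree_C_mul_le _ _).trans <| natDegree_pow_le.trans <| by
      simpa using Nat.mul_le_mul_left n (natDegree_linear_le (a := β) (b := α))
  calc f k = p.coeff k := by simp [p, Nat.lt_succ_of_le hkN]
    _ = 0 := hp ▸ coeff_eq_zero_of_natDegree_lt (hdeg.trans_lt hnk)

theorem stmt0_general {V : Type*} [AddCommGroup V] [Module ℂ V]
    (n : ℕ)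
    (L : MultilinearMap ℂ (fun _ : Fin (2*n) => V) ℂ)
    (hLsymm : ∀ (σ : Equiv.Perm (Fin (2*n))) (v : Fin (2*n) → V), L (v ∘ σ) = L v)
    (q : V →ₗ[ℂ] V →ₗ[ℂ] ℂ)
    (C : ℂ) (hFujiki : ∀ x : V, L (fun _ => x) = C * (q x x)^n)
    (h : V) (hh : q h h = 0) :
    ∀ k : ℕ, n < k → k ≤ 2*n → ∀ a : V,
      L (fun i => if (i : ℕ) < 2*n - k then a else h) = 0 := by
  intro k hnk hk a
  set F : ℕ → ℂ := fun m => L (fun i => if (i : ℕ) < 2*n - m then a else h)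
  have hexpand (c : ℂ) : ∑ m ∈ range (2*n + 1), ((2*n).choose m * F m) * c ^ m =
      C * (q a a + (q a h + q h a) * c) ^ n := by
    have hq : q (a + c • h) (a + c • h) = q a a + (q a h + q h a) * c := by
      simp only [map_add, map_smul, LinearMap.add_apply, LinearMap.smul_apply, smul_eq_mul, hh]
      ring
    rw [← hq, ← hFujiki,
      L.apply_const_add_smul a h F (L.apply_piecewise_const_eq_apply_ite hLsymm a h),
      Fintype.card_fin]
    refine sum_congr rfl fun m _ => ?_
    simp only [nsmul_eq_mul, smul_eq_mul]
    ring
  have hcoeff := eq_zero_of_sum_mul_pow_eq_mul_linear_pow _ _ _ _ hexpand hnk hk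
  exact (mul_eq_zero.mp hcoeff).resolve_left (by exact_mod_cast (Nat.choose_pos hk).ne')

/-- Fujiki-type relation; if q(h,h)=0 then all polarized values of L with
more than n copies of h vanish. -/
theorem stmt0 {V : Type*} [AddCommGroup V] [Module ℂ V] [FiniteDimensional ℂ V]
    (n : ℕ) (hn : 1 ≤ n)
    (L : MultilinearMap ℂ (fun _ : Fin (2*n) => V) ℂ)
    (hLsymm : ∀ (σ : Equiv.Perm (Fin (2*n))) (v : Fin (2*n) → V), L (v ∘ σ) = L v)
    (q : V →ₗ[ℂ] V →ₗ[ℂ] ℂ) (hqsymm : ∀ x y, q x y = q y x)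
    (C : ℂ) (hFujiki : ∀ x : V, L (fun _ => x) = C * (q x x)^n)
    (h : V) (hh : q h h = 0) :
    ∀ k : ℕ, n < k → k ≤ 2*n → ∀ a : V,
      L (fun i => if (i : ℕ) < 2*n - k then a else h) = 0 :=
  stmt0_general n L hLsymm q C hFujiki h hh
end

section
/- Let V be a finite-dimensional complex vector space, L a symmetric 2n-multilinear form on V, q a symmetric bilinear form on V, and C ∈ ℂ with L(x,...,x) = C·q(x,x)^n for all x ∈ V. If h ∈ V satisfies q(h,h) = 0, then for all a ∈ V: binomial(2n,n) · L(a,...,a,h,...,h) = C · 2^n · q(a,h)^n, where a and h each appear n times in L. -/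
/-!
Expand `L (a + t • h, …, a + t • h)` by multilinearity: by symmetry each term depends only on
how many slots carry `h`, so the coefficient of `t ^ k` is `(2n).choose k` times `L` with `h` in
`k` slots and `a` in the others. Because `q h h = 0`, the Fujiki relation turns the same
expression into `C * (q a a + 2 * q a h * t) ^ n`, a polynomial in `t` whose `t ^ n`
coefficient is `C * (2 * q a h) ^ n`. Two polynomial functions on `ℂ` agreeing everywhere have
the same coefficients.
-/

open Finset Polynomial

theorem Equiv.Perm.exists_forall_apply_iff_of_card_eq {α : Type*} [Fintype α]
    {p q : α → Prop} [DecidablePred p] [DecidablePred q] (h : #{x | p x} = #{x | q x}) :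
    ∃ σ : Perm α, ∀ x, p (σ x) ↔ q x := by
  have hcard : Fintype.card {x // q x} = Fintype.card {x // p x} := by
    simp only [Fintype.card_subtype, h]
  have hcard_compl : Fintype.card {x // ¬q x} = Fintype.card {x // ¬p x} := by
    rw [Fintype.card_subtype_compl, Fintype.card_subtype_compl, hcard]
  refine ⟨Equiv.subtypeCongr (Fintype.equivOfCardEq hcard) (Fintype.equivOfCardEq hcard_compl),
    fun x => ?_⟩
  by_cases hx : q x
  · simpa [Equiv.subtypeCongr, sumCompl_symm_apply_of_pos hx, hx] using
      (Fintype.equivOfCardEq hcard ⟨x, hx⟩).2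
  · simpa [Equiv.subtypeCongr, sumCompl_symm_apply_of_neg hx, hx] using
      (Fintype.equivOfCardEq hcard_compl ⟨x, hx⟩).2

namespace Polynomial

variable {R : Type*}

theorem coeff_eq_of_forall_eval_eq_sum [CommRing R] [IsDomain R] [Infinite R] {p : R[X]}
    {s : Finset ℕ} {c : ℕ → R} (h : ∀ t, p.eval t = ∑ i ∈ s, c i * t ^ i) {k : ℕ}
    (hk : k ∈ s) : p.coeff k = c k := by
  have hp : p = ∑ i ∈ s, C (c i) * X ^ i :=
    Polynomial.funext fun t => by simp [h, eval_finsetSum]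
  rw [hp, finsetSum_coeff, Finset.sum_eq_single_of_mem k hk fun i _ hik => ?_]
  · simp
  · simp [coeff_X_pow, hik.symm]

theorem coeff_linear_pow_self [CommSemiring R] (a b : R) (n : ℕ) :
    ((C a * X + C b) ^ n).coeff n = a ^ n := by
  simpa using coeff_pow_of_natDegree_le (m := n) (natDegree_linear_le (a := a) (b := b))

end Polynomial

namespace MultilinearMap

section Symmetric

variable {R M N : Type*} [CommSemiring R] [AddCommMonoid M] [Module R M] [AddCommMonoid N]
  [Module R N]

theorem map_ite_eq_of_card_eq {ι : Type*} [Fintype ι] {L : MultilinearMap R (fun _ : ι => M) N}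
    (hL : ∀ (σ : Equiv.Perm ι) v, L (v ∘ σ) = L v) (x y : M)
    {p q : ι → Prop} [DecidablePred p] [DecidablePred q] (h : #{i | p i} = #{i | q i}) :
    L (fun i => if p i then x else y) = L (fun i => if q i then x else y) := by
  obtain ⟨σ, hσ⟩ := Equiv.Perm.exists_forall_apply_iff_of_card_eq h
  rw [← hL σ]
  congr 1
  funext i
  simp only [Function.comp_apply, hσ]

theorem map_const_add_smul_eq_sum {m : ℕ} {L : MultilinearMap R (fun _ : Fin m => M) N}
    (hL : ∀ (σ : Equiv.Perm (Fin m)) v, L (v ∘ σ) = L v) (x y : M) (t : R) :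
    L (fun _ => x + t • y) = ∑ k ∈ Finset.range (m + 1),
      ((m.choose k : R) * t ^ k) • L (fun i => if (i : ℕ) < k then y else x) := by
  have hsplit : (fun _ : Fin m => x + t • y) = (fun _ => t • y) + fun _ => x := by
    funext; exact add_comm _ _
  have hterm : ∀ s : Finset (Fin m), L (s.piecewise (fun _ => t • y) fun _ => x) =
      t ^ #s • L (fun i => if (i : ℕ) < #s then y else x) := by
    intro s
    have hcard : #{i | i ∈ s} = #{i : Fin m | (i : ℕ) < #s} := by
      rw [filter_univ_mem, Fin.card_filter_val_lt,
        min_eq_right ((card_le_univ s).trans_eq (Fintype.card_fin m))]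
    calc L (s.piecewise (fun _ => t • y) fun _ => x)
        = L (s.piecewise (fun i => t • s.piecewise (fun _ => y) (fun _ => x) i)
            (s.piecewise (fun _ => y) fun _ => x)) := by
          congr 1
          exact s.piecewise_congr (fun i hi => by rw [s.piecewise_eq_of_mem _ _ hi])
            fun i hi => by rw [s.piecewise_eq_of_notMem _ _ hi]
      _ = t ^ #s • L (fun i => if i ∈ s then y else x) := by
          rw [L.map_piecewise_smul, prod_const]; rfl
      _ = t ^ #s • L (fun i => if (i : ℕ) < #s then y else x) := by
          rw [map_ite_eq_of_card_eq hL y x hcard]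
  rw [hsplit, map_add_univ, ← powerset_univ]
  simp only [hterm]
  rw [sum_powerset_apply_card (fun k => t ^ k • L (fun i => if (i : ℕ) < k then y else x)),
    card_univ, Fintype.card_fin]
  simp only [← Nat.cast_smul_eq_nsmul R, smul_smul]

end Symmetric

theorem choose_mul_map_ite_eq_coeff {R M : Type*} [CommRing R] [IsDomain R] [Infinite R]
    [AddCommMonoid M] [Module R M] {m : ℕ} {L : MultilinearMap R (fun _ : Fin m => M) R}
    (hL : ∀ (σ : Equiv.Perm (Fin m)) v, L (v ∘ σ) = L v) (x y : M) {p : R[X]}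
    (hp : ∀ t, L (fun _ => x + t • y) = p.eval t) {k : ℕ} (hk : k ≤ m) :
    (m.choose k : R) * L (fun i => if (i : ℕ) < k then y else x) = p.coeff k := by
  refine (Polynomial.coeff_eq_of_forall_eval_eq_sum
    (c := fun k => (m.choose k : R) * L (fun i => if (i : ℕ) < k then y else x)) (fun t => ?_)
    (Finset.mem_range_succ_iff.mpr hk)).symm
  rw [← hp, map_const_add_smul_eq_sum hL]
  simp only [smul_eq_mul]
  exact Finset.sum_congr rfl fun _ _ => by ring

end MultilinearMap

theorem LinearMap.BilinForm.apply_add_smul_self_of_isotropic {R M : Type*} [CommSemiring R]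
    [AddCommMonoid M] [Module R M] {B : LinearMap.BilinForm R M} (hB : ∀ x y, B x y = B y x)
    {y : M} (hy : B y y = 0) (x : M) (t : R) :
    B (x + t • y) (x + t • y) = B x x + 2 * B x y * t := by
  simp only [map_add, map_smul, LinearMap.add_apply, LinearMap.smul_apply, smul_eq_mul, hy,
    hB y x]
  ring

theorem stmt1_general {V : Type*} [AddCommGroup V] [Module ℂ V]
    (n : ℕ)
    (L : MultilinearMap ℂ (fun _ : Fin (2*n) => V) ℂ)
    (hLsymm : ∀ (σ : Equiv.Perm (Fin (2*n))) (v : Fin (2*n) → V), L (v ∘ σ) = L v)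
    (q : V →ₗ[ℂ] V →ₗ[ℂ] ℂ) (hqsymm : ∀ x y, q x y = q y x)
    (C : ℂ) (hFujiki : ∀ x : V, L (fun _ => x) = C * (q x x)^n)
    (h : V) (hh : q h h = 0) :
    ∀ a : V,
      (Nat.choose (2*n) n : ℂ) * L (fun i => if (i : ℕ) < n then a else h)
        = C * 2^n * (q a h)^n := by
  intro a
  have hpoly : ∀ t : ℂ, L (fun _ => a + t • h) =
      (Polynomial.C C * (Polynomial.C (2 * q a h) * X + Polynomial.C (q a a)) ^ n).eval t := by
    intro t
    rw [hFujiki, LinearMap.BilinForm.apply_add_smul_self_of_isotropic hqsymm hh]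
    simp only [eval_mul, eval_C, eval_pow, eval_add, eval_X]
    ring
  have hcard : #{i : Fin (2 * n) | ¬(i : ℕ) < n} = #{i : Fin (2 * n) | (i : ℕ) < n} := by
    have := card_filter_add_card_filter_not (s := univ) fun i : Fin (2 * n) => (i : ℕ) < n
    rw [card_univ, Fintype.card_fin, Fin.card_filter_val_lt] at this
    rw [Fin.card_filter_val_lt]
    omega
  have hswap := MultilinearMap.map_ite_eq_of_card_eq hLsymm h a hcard
  simp only [ite_not] at hswap
  rw [hswap, MultilinearMap.choose_mul_map_ite_eq_coeff hLsymm a h hpoly (by omega), coeff_C_mul,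
    coeff_linear_pow_self, mul_pow, mul_assoc]

/-- the middle (λ^n) coefficient of the Fujiki relation. -/
theorem stmt1 {V : Type*} [AddCommGroup V] [Module ℂ V] [FiniteDimensional ℂ V]
    (n : ℕ) (hn : 1 ≤ n)
    (L : MultilinearMap ℂ (fun _ : Fin (2*n) => V) ℂ)
    (hLsymm : ∀ (σ : Equiv.Perm (Fin (2*n))) (v : Fin (2*n) → V), L (v ∘ σ) = L v)
    (q : V →ₗ[ℂ] V →ₗ[ℂ] ℂ) (hqsymm : ∀ x y, q x y = q y x)
    (C : ℂ) (hFujiki : ∀ x : V, L (fun _ => x) = C * (q x x)^n)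
    (h : V) (hh : q h h = 0) :
    ∀ a : V,
      (Nat.choose (2*n) n : ℂ) * L (fun i => if (i : ℕ) < n then a else h)
        = C * 2^n * (q a h)^n :=
  stmt1_general n L hLsymm q hqsymm C hFujiki h hh
end

section
/- Let V be a finite-dimensional complex vector space, L a symmetric 2n-multilinear form, q a symmetric bilinear form, and C ∈ ℂ with L(x,...,x) = C·q(x,x)^n for all x. Then for all a, h ∈ V: L(a,...,a,h) = C · q(a,a)^{n-1} · q(a,h), where a appears 2n−1 times. In particular, if q(a,h) = 0 then L(a,...,a,h) = 0. -/
/-- the λ^1 coefficient of the Fujiki relation. -/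
theorem stmt2 {V : Type*} [AddCommGroup V] [Module ℂ V] [FiniteDimensional ℂ V]
    (n : ℕ) (hn : 1 ≤ n)
    (L : MultilinearMap ℂ (fun _ : Fin (2*n) => V) ℂ)
    (hLsymm : ∀ (σ : Equiv.Perm (Fin (2*n))) (v : Fin (2*n) → V), L (v ∘ σ) = L v)
    (q : V →ₗ[ℂ] V →ₗ[ℂ] ℂ) (hqsymm : ∀ x y, q x y = q y x)
    (C : ℂ) (hFujiki : ∀ x : V, L (fun _ => x) = C * (q x x)^n) :
    ∀ a h : V,
      L (fun i => if (i : ℕ) < 2*n - 1 then a else h)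
        = C * (q a a)^(n-1) * (q a h) := by
  classical
  intro a h
  set A : ℂ := q a a with hA
  set B : ℂ := q a h with hB
  set D : ℂ := q h h with hD
  set g : ℕ → ℂ := fun k => L (fun i => if (i : ℕ) < k then a else h) with hg
  -- Step 1: by symmetry, L on a finset-indexed mix only depends on the cardinality
  have key : ∀ s : Finset (Fin (2*n)),
      L (fun i => if i ∈ s then a else h) = g s.card := by
    intro s
    have hscard : s.card ≤ 2*n := by
      simpa using Finset.card_le_univ s
    set t : Finset (Fin (2*n)) := Finset.univ.filter (fun i => (i : ℕ) < s.card) with ht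
    have htcard : t.card = s.card := by
      have : t = Finset.attachFin (Finset.range s.card)
          (fun m hm => lt_of_lt_of_le (Finset.mem_range.1 hm) hscard) := by
        ext i
        simp [ht, Finset.mem_attachFin]
      rw [this, Finset.card_attachFin, Finset.card_range]
    have hcard1 : Fintype.card {x // x ∈ s} = Fintype.card {x // x ∈ t} := by
      simp [Fintype.card_coe, htcard]
    have hcard2 : Fintype.card {x // ¬ x ∈ s} = Fintype.card {x // ¬ x ∈ t} := by
      rw [Fintype.card_subtype_compl, Fintype.card_subtype_compl, hcard1]
    let e1 : {x // x ∈ s} ≃ {x // x ∈ t} := Fintype.equivOfCardEq hcard1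
    let e2 : {x // ¬ x ∈ s} ≃ {x // ¬ x ∈ t} := Fintype.equivOfCardEq hcard2
    let σ : Equiv.Perm (Fin (2*n)) := Equiv.subtypeCongr e1 e2
    have hσ : ∀ i, (σ i ∈ t ↔ i ∈ s) := by
      intro i
      by_cases hi : i ∈ s
      · have : σ i = (e1 ⟨i, hi⟩ : Fin (2*n)) := by
          simp [σ, Equiv.subtypeCongr, hi]
        rw [this]
        simp only [hi, iff_true]
        exact (e1 ⟨i, hi⟩).2
      · have : σ i = (e2 ⟨i, hi⟩ : Fin (2*n)) := by
          simp [σ, Equiv.subtypeCongr, hi]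
        rw [this]
        simp only [hi, iff_false]
        exact (e2 ⟨i, hi⟩).2
    have := hLsymm σ (fun i => if (i : ℕ) < s.card then a else h)
    simp only [hg]
    rw [← this]
    congr 1
    funext i
    have : ((σ i : ℕ) < s.card) ↔ i ∈ s := by
      rw [← hσ i]
      simp [ht]
    simp only [Function.comp]
    by_cases hi : i ∈ s
    · rw [if_pos (this.2 hi), if_pos hi]
    · rw [if_neg (fun hc => hi (this.1 hc)), if_neg hi]
  -- Step 2: expansion of the Fujiki relation at a + λ h
  have expand : ∀ lam : ℂ,
      C * (A + 2*B*lam + D*lam^2)^n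
        = ∑ k ∈ Finset.range (2*n+1),
            ((2*n).choose k : ℂ) * (g k * lam^(2*n-k)) := by
    intro lam
    have h1 : L (fun _ => a + lam • h) = C * (q (a + lam • h) (a + lam • h))^n :=
      hFujiki _
    have hq : q (a + lam • h) (a + lam • h) = A + 2*B*lam + D*lam^2 := by
      have hba : q h a = B := by rw [hB, hqsymm]
      simp [map_add, map_smul, smul_eq_mul, hba, ← hA, ← hB, ← hD]
      ring
    have h2 : L (fun _ => a + lam • h)
        = ∑ s : Finset (Fin (2*n)), lam^(2*n - s.card) * g s.card := by
      have : (fun _ : Fin (2*n) => a + lam • h)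
          = (fun _ => a) + (fun _ => lam • h) := rfl
      rw [this, L.map_add_univ]
      refine Finset.sum_congr rfl fun s _ => ?_
      have hpw : s.piecewise (fun _ => a) (fun _ => lam • h)
          = (sᶜ).piecewise (fun i => lam • (if i ∈ s then a else h))
              (fun i => if i ∈ s then a else h) := by
        funext i
        by_cases hi : i ∈ s <;> simp [Finset.piecewise, hi]
      rw [hpw, L.map_piecewise_smul]
      rw [Finset.prod_const, key s, Finset.card_compl, Fintype.card_fin, smul_eq_mul]
    have h3 : ∑ s : Finset (Fin (2*n)), lam^(2*n - s.card) * g s.card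
        = ∑ k ∈ Finset.range (2*n+1),
            ((2*n).choose k : ℂ) * (g k * lam^(2*n-k)) := by
      rw [← Finset.powerset_univ, Finset.sum_powerset_apply_card
        (fun k => lam^(2*n-k) * g k)]
      simp [Finset.card_univ, nsmul_eq_mul]
      exact Finset.sum_congr rfl fun k _ => by ring
    rw [← h3, ← h2, h1, hq]
  -- Step 3: compare coefficients of λ^1 via polynomials
  set P : Polynomial ℂ := ∑ k ∈ Finset.range (2*n+1),
      Polynomial.C (((2*n).choose k : ℂ) * g k) * Polynomial.X^(2*n-k) with hP
  set R : Polynomial ℂ := Polynomial.C A + Polynomial.C (2*B) * Polynomial.X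
      + Polynomial.C D * Polynomial.X^2 with hR
  set Q : Polynomial ℂ := Polynomial.C C * R^n with hQ
  have hPQ : P = Q := by
    apply Polynomial.funext
    intro lam
    have hPe : P.eval lam = ∑ k ∈ Finset.range (2*n+1),
        ((2*n).choose k : ℂ) * (g k * lam^(2*n-k)) := by
      rw [hP, Polynomial.eval_finset_sum]
      exact Finset.sum_congr rfl fun k _ => by simp [mul_assoc]
    have hQe : Q.eval lam = C * (A + 2*B*lam + D*lam^2)^n := by
      simp [hQ, hR]
    rw [hPe, hQe, expand lam]
  have hc := congrArg (fun p => Polynomial.coeff p 1) hPQ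
  -- coefficient 1 of P
  have hcP : P.coeff 1 = (2*n : ℂ) * g (2*n-1) := by
    rw [hP, Polynomial.finset_sum_coeff]
    rw [Finset.sum_eq_single (2*n-1)]
    · rw [Polynomial.coeff_C_mul, Polynomial.coeff_X_pow]
      have h1 : 2*n - (2*n-1) = 1 := by omega
      rw [h1, if_pos rfl, mul_one]
      have h2 : (2*n).choose (2*n-1) = 2*n := by
        rw [Nat.choose_symm (by omega : 1 ≤ 2*n), Nat.choose_one_right]
      rw [h2]
      push_cast
      ring
    · intro k hk hkne
      rw [Polynomial.coeff_C_mul, Polynomial.coeff_X_pow]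
      have : ¬ (1 = 2*n - k) := by
        rw [Finset.mem_range] at hk
        omega
      rw [if_neg this, mul_zero]
    · intro hmem
      exfalso
      apply hmem
      rw [Finset.mem_range]
      omega
  -- coefficient 1 of Q
  have hcQ : Q.coeff 1 = C * ((n : ℂ) * A^(n-1) * (2*B)) := by
    have hder : Q.coeff 1 = (Polynomial.derivative Q).eval 0 := by
      rw [← Polynomial.coeff_zero_eq_eval_zero, Polynomial.coeff_derivative]
      simp
    rw [hder, hQ, Polynomial.derivative_C_mul, Polynomial.derivative_pow]
    simp [hR]
  rw [hcP, hcQ] at hc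
  have h2n : (2*(n:ℂ)) ≠ 0 := by
    have hn' : (n:ℂ) ≠ 0 := Nat.cast_ne_zero.mpr (by omega)
    exact mul_ne_zero two_ne_zero hn'
  have : (2*(n:ℂ)) * g (2*n-1) = (2*(n:ℂ)) * (C * A^(n-1) * B) := by
    linear_combination hc
  exact mul_left_cancel₀ h2n this
end

section
/- Let V be a finite-dimensional complex vector space, L a symmetric 2n-multilinear form on V (n ≥ 2), q a symmetric bilinear form, and C ∈ ℂ with L(x,...,x) = C·q(x,x)^n for all x ∈ V. Suppose w, a, h ∈ V satisfy q(w,a) = 0, q(w,h) = 0, and q(h,h) = 0. Then L(w, w, a, ..., a, h, ..., h) = 0, where a appears n−2 times and h appears n times. -/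
open MvPolynomial Finset

namespace Stmt8Aux

/-- Every monomial of `p` has exponent of `X 1` ≤ exponent of `X 0`. -/
def Good (p : MvPolynomial (Fin 2) ℂ) : Prop :=
  ∀ m : Fin 2 →₀ ℕ, coeff m p ≠ 0 → m 1 ≤ m 0

lemma good_monomial {d : Fin 2 →₀ ℕ} (c : ℂ) (hd : d 1 ≤ d 0) :
    Good (monomial d c) := by
  intro m hm
  rw [coeff_monomial] at hm
  split_ifs at hm with h
  · exact h ▸ hd
  · exact absurd rfl hm

lemma good_C (c : ℂ) : Good (MvPolynomial.C c) := by
  simpa using good_monomial (d := 0) c le_rfl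

lemma good_add {p q : MvPolynomial (Fin 2) ℂ} (hp : Good p) (hq : Good q) :
    Good (p + q) := by
  intro m hm
  rw [coeff_add] at hm
  by_cases h : coeff m p = 0
  · exact hq m (by simpa [h] using hm)
  · exact hp m h

lemma good_mul {p q : MvPolynomial (Fin 2) ℂ} (hp : Good p) (hq : Good q) :
    Good (p * q) := by
  intro m hm
  rw [coeff_mul] at hm
  obtain ⟨x, hx, hne⟩ := Finset.exists_ne_zero_of_sum_ne_zero hm
  have h1 : coeff x.1 p ≠ 0 := fun h => hne (by simp [h])
  have h2 : coeff x.2 q ≠ 0 := fun h => hne (by simp [h])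
  have hsum : x.1 + x.2 = m := Finset.HasAntidiagonal.mem_antidiagonal.mp hx
  have e1 := hp _ h1
  have e2 := hq _ h2
  have f1 : m 1 = x.1 1 + x.2 1 := by rw [← hsum]; simp
  have f0 : m 0 = x.1 0 + x.2 0 := by rw [← hsum]; simp
  omega

lemma good_pow {p : MvPolynomial (Fin 2) ℂ} (hp : Good p) (k : ℕ) :
    Good (p ^ k) := by
  induction k with
  | zero => simpa using good_C 1
  | succ k ih => rw [pow_succ]; exact good_mul ih hp

lemma X0_mul_X1 : (X 0 * X 1 : MvPolynomial (Fin 2) ℂ) =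
    monomial (Finsupp.single 0 1 + Finsupp.single 1 1) 1 := by
  rw [X, X, monomial_mul, one_mul]

lemma good_Q (A B D Cc : ℂ) (n : ℕ) :
    Good (MvPolynomial.C Cc *
      (MvPolynomial.C A + MvPolynomial.C B * X 0 ^ 2 +
        MvPolynomial.C D * X 0 * X 1) ^ n) := by
  apply good_mul (good_C Cc)
  apply good_pow
  apply good_add (good_add (good_C A) ?_) ?_
  · apply good_mul (good_C B)
    rw [X_pow_eq_monomial]
    exact good_monomial _ (by simp)
  · rw [mul_assoc, X0_mul_X1]
    apply good_mul (good_C D)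
    exact good_monomial _ (by simp [Finsupp.single_apply])

lemma single_pair_eq_iff {k1 k2 l1 l2 : ℕ} :
    (Finsupp.single (0 : Fin 2) k1 + Finsupp.single 1 k2 =
      Finsupp.single 0 l1 + Finsupp.single 1 l2) ↔ (k1 = l1 ∧ k2 = l2) := by
  constructor
  · intro h
    constructor
    · have := DFunLike.congr_fun h 0
      simpa [Finsupp.single_apply] using this
    · have := DFunLike.congr_fun h 1
      simpa [Finsupp.single_apply] using this
  · rintro ⟨rfl, rfl⟩; rfl

/-- fiber count -/
def cnt (N : ℕ) (j : Fin 3) (r : Fin N → Fin 3) : ℕ :=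
  (univ.filter (fun i => r i = j)).card

lemma card_filter_fin {N : ℕ} (p : ℕ → Prop) [DecidablePred p] :
    (univ.filter (fun i : Fin N => p i.val)).card =
      ((Finset.range N).filter p).card := by
  rw [← Finset.card_image_of_injective (univ.filter (fun i : Fin N => p i.val))
    Fin.val_injective]
  congr 1
  ext m
  simp only [Finset.mem_image, Finset.mem_filter, Finset.mem_univ, true_and,
    Finset.mem_range]
  constructor
  · rintro ⟨i, hi, rfl⟩; exact ⟨i.isLt, hi⟩
  · rintro ⟨hm, hp⟩; exact ⟨⟨m, hm⟩, hp, rfl⟩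

lemma card_filter_eq {N : ℕ} (p : Fin N → Prop) [DecidablePred p]
    (q : ℕ → Prop) [DecidablePred q] (hpq : ∀ i : Fin N, p i ↔ q i.val) :
    (univ.filter p).card = ((Finset.range N).filter q).card := by
  rw [Finset.filter_congr (fun i _ => hpq i)]
  exact card_filter_fin q

/-- the standard pattern -/
def pat (n : ℕ) : Fin (2*n) → Fin 3 :=
  fun i => if (i : ℕ) < 2 then 0 else if (i : ℕ) < n then 1 else 2

lemma cnt_pat_1 (n : ℕ) (hn : 2 ≤ n) : cnt (2*n) 1 (pat n) = n - 2 := by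
  unfold cnt
  refine (card_filter_eq _ (fun m => 2 ≤ m ∧ m < n) ?_).trans ?_
  · intro i
    unfold pat
    split_ifs with h1 h2 <;> simp <;> omega
  · have e2 : (Finset.range (2*n)).filter (fun m => 2 ≤ m ∧ m < n) =
        Finset.Ico 2 n := by
      ext m; simp [Finset.mem_Ico]; omega
    rw [e2, Nat.card_Ico]

lemma cnt_pat_2 (n : ℕ) (hn : 2 ≤ n) : cnt (2*n) 2 (pat n) = n := by
  unfold cnt
  refine (card_filter_eq _ (fun m => n ≤ m) ?_).trans ?_
  · intro i
    unfold pat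
    split_ifs with h1 h2 <;> simp <;> omega
  · have e2 : (Finset.range (2*n)).filter (fun m => n ≤ m) =
        Finset.Ico n (2*n) := by
      ext m; simp [Finset.mem_Ico]; omega
    rw [e2, Nat.card_Ico]
    omega

lemma cnt_total (N : ℕ) (r : Fin N → Fin 3) :
    cnt N 0 r + cnt N 1 r + cnt N 2 r = N := by
  have h := Finset.card_eq_sum_card_fiberwise
    (f := r) (s := univ) (t := univ) (fun i _ => Finset.mem_univ (r i))
  rw [Finset.card_univ, Fintype.card_fin, Fin.sum_univ_three] at h
  unfold cnt
  omega

lemma exists_perm (N : ℕ) (r r' : Fin N → Fin 3)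
    (hc : ∀ j, cnt N j r = cnt N j r') :
    ∃ σ : Equiv.Perm (Fin N), ∀ i, r' (σ i) = r i := by
  have hcard : ∀ j : Fin 3,
      Fintype.card {i : Fin N // r i = j} = Fintype.card {i : Fin N // r' i = j} := by
    intro j
    rw [Fintype.card_subtype, Fintype.card_subtype]
    exact hc j
  exact ⟨Equiv.ofFiberEquiv (f := r) (g := r')
      (fun j => Fintype.equivOfCardEq (hcard j)),
    fun i => Equiv.ofFiberEquiv_map (fun j => Fintype.equivOfCardEq (hcard j)) i⟩

end Stmt8Aux

open Stmt8Aux in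
/-- the s^{n-2} t^n coefficient vanishes. -/
theorem stmt8 {V : Type*} [AddCommGroup V] [Module ℂ V] [FiniteDimensional ℂ V]
    (n : ℕ) (hn : 2 ≤ n)
    (L : MultilinearMap ℂ (fun _ : Fin (2*n) => V) ℂ)
    (hLsymm : ∀ (σ : Equiv.Perm (Fin (2*n))) (v : Fin (2*n) → V), L (v ∘ σ) = L v)
    (q : V →ₗ[ℂ] V →ₗ[ℂ] ℂ) (hqsymm : ∀ x y, q x y = q y x)
    (C : ℂ) (hFujiki : ∀ x : V, L (fun _ => x) = C * (q x x)^n)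
    (w a h : V) (hwa : q w a = 0) (hwh : q w h = 0) (hhh : q h h = 0) :
    L (fun i => if (i : ℕ) < 2 then w else if (i : ℕ) < n then a else h) = 0 := by
  classical
  -- Step 1: multilinear expansion
  have step1 : ∀ s t : ℂ, L (fun _ => w + s • a + t • h) =
      ∑ r : Fin (2*n) → Fin 3,
        s ^ cnt (2*n) 1 r * t ^ cnt (2*n) 2 r * L (fun i => ![w,a,h] (r i)) := by
    intro s t
    have e1 : (fun _ : Fin (2*n) => w + s • a + t • h) =
        fun _ => ∑ j : Fin 3, (![(1:ℂ), s, t] j) • ![w,a,h] j := by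
      funext i
      simp [Fin.sum_univ_three]
    rw [e1, L.map_sum (g := fun _ j => (![(1:ℂ), s, t] j) • ![w,a,h] j)]
    refine Finset.sum_congr rfl fun r _ => ?_
    rw [L.map_smul_univ (fun i => ![(1:ℂ), s, t] (r i)) (fun i => ![w,a,h] (r i))]
    have hprod : (∏ i : Fin (2*n), ![(1:ℂ), s, t] (r i)) =
        ∏ j : Fin 3, (![(1:ℂ), s, t] j) ^ cnt (2*n) j r := by
      rw [← Finset.prod_fiberwise_of_maps_to (fun i _ => Finset.mem_univ (r i))
        (fun i => ![(1:ℂ), s, t] (r i))]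
      refine Finset.prod_congr rfl fun j _ => ?_
      rw [Finset.prod_congr rfl (fun i hi => by
        rw [(Finset.mem_filter.mp hi).2]), Finset.prod_const]
      rfl
    rw [hprod, Fin.prod_univ_three]
    simp [smul_eq_mul]
  -- Step 2: the quadratic form
  have hqaw : q a w = 0 := (hqsymm a w).trans hwa
  have hqhw : q h w = 0 := (hqsymm h w).trans hwh
  have hqha : q h a = q a h := hqsymm h a
  have step2 : ∀ s t : ℂ, q (w + s • a + t • h) (w + s • a + t • h) =
      q w w + s^2 * q a a + 2 * s * t * q a h := by
    intro s t
    simp only [map_add, map_smul, LinearMap.add_apply, LinearMap.smul_apply,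
      smul_eq_mul, hwa, hwh, hhh, hqaw, hqhw, hqha]
    ring
  -- Step 3: polynomials
  set P : MvPolynomial (Fin 2) ℂ :=
    ∑ r : Fin (2*n) → Fin 3,
      MvPolynomial.C (L (fun i => ![w,a,h] (r i))) * X 0 ^ cnt (2*n) 1 r
        * X 1 ^ cnt (2*n) 2 r with hP
  set Q : MvPolynomial (Fin 2) ℂ :=
    MvPolynomial.C C * (MvPolynomial.C (q w w) + MvPolynomial.C (q a a) * X 0 ^ 2
      + MvPolynomial.C (2 * q a h) * X 0 * X 1) ^ n with hQ
  have hPQ : P = Q := by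
    apply MvPolynomial.funext
    intro x
    have hevP : eval x P = ∑ r : Fin (2*n) → Fin 3,
        L (fun i => ![w,a,h] (r i)) * (x 0) ^ cnt (2*n) 1 r
          * (x 1) ^ cnt (2*n) 2 r := by
      rw [hP, map_sum]
      simp
    have hevQ : eval x Q =
        C * (q w w + (x 0)^2 * q a a + 2 * (x 0) * (x 1) * q a h) ^ n := by
      rw [hQ]
      simp only [map_mul, map_add, map_pow, eval_C, eval_X, eval_mul, eval_add,
        eval_pow]
      ring
    rw [hevP, hevQ, ← step2 (x 0) (x 1), ← hFujiki, step1 (x 0) (x 1)]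
    refine Finset.sum_congr rfl fun r _ => ?_
    ring
  -- Step 4: coefficient of the target monomial
  have hQ0 : coeff (Finsupp.single 0 (n - 2) + Finsupp.single 1 n) Q = 0 := by
    by_contra hne
    have hg := good_Q (q w w) (q a a) (2 * q a h) C n _ hne
    have h1 : ((Finsupp.single (0 : Fin 2) (n-2) + Finsupp.single 1 n : Fin 2 →₀ ℕ)) 1 = n := by
      simp [Finsupp.single_apply]
    have h0 : ((Finsupp.single (0 : Fin 2) (n-2) + Finsupp.single 1 n : Fin 2 →₀ ℕ)) 0 = n - 2 := by
      simp [Finsupp.single_apply]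
    omega
  have hP0 : coeff (Finsupp.single 0 (n - 2) + Finsupp.single 1 n) P =
      ∑ r ∈ univ.filter (fun r : Fin (2*n) → Fin 3 =>
        cnt (2*n) 1 r = n - 2 ∧ cnt (2*n) 2 r = n),
        L (fun i => ![w,a,h] (r i)) := by
    rw [hP, MvPolynomial.coeff_sum, Finset.sum_filter]
    refine Finset.sum_congr rfl fun r _ => ?_
    simp only [X_pow_eq_monomial, C_mul_monomial, monomial_mul, mul_one,
      coeff_monomial]
    by_cases hc : cnt (2*n) 1 r = n - 2 ∧ cnt (2*n) 2 r = n
    · rw [if_pos (single_pair_eq_iff.mpr hc), if_pos hc]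
    · rw [if_neg (fun he => hc (single_pair_eq_iff.mp he)), if_neg hc]
  -- Step 5: symmetry
  have hsymm : ∀ r : Fin (2*n) → Fin 3,
      cnt (2*n) 1 r = n - 2 → cnt (2*n) 2 r = n →
      L (fun i => ![w,a,h] (r i)) = L (fun i => ![w,a,h] (pat n i)) := by
    intro r h1 h2
    have hc : ∀ j : Fin 3, cnt (2*n) j r = cnt (2*n) j (pat n) := by
      have t1 := cnt_total (2*n) r
      have t2 := cnt_total (2*n) (pat n)
      have c1 := cnt_pat_1 n hn
      have c2 := cnt_pat_2 n hn
      have e0 : cnt (2*n) 0 r = cnt (2*n) 0 (pat n) := by omega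
      have e1 : cnt (2*n) 1 r = cnt (2*n) 1 (pat n) := by omega
      have e2 : cnt (2*n) 2 r = cnt (2*n) 2 (pat n) := by omega
      intro j
      fin_cases j
      · exact e0
      · exact e1
      · exact e2
    obtain ⟨σ, hσ⟩ := exists_perm (2*n) r (pat n) hc
    have e : (fun i => ![w,a,h] (r i)) = (fun i => ![w,a,h] (pat n i)) ∘ σ := by
      funext i
      simp [Function.comp, hσ i]
    rw [e, hLsymm σ (fun i => ![w,a,h] (pat n i))]
  -- put it together
  have hmem : pat n ∈ univ.filter (fun r : Fin (2*n) → Fin 3 =>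
      cnt (2*n) 1 r = n - 2 ∧ cnt (2*n) 2 r = n) := by
    simp [cnt_pat_1 n hn, cnt_pat_2 n hn]
  have hPconst : coeff (Finsupp.single 0 (n - 2) + Finsupp.single 1 n) P =
      ((univ.filter (fun r : Fin (2*n) → Fin 3 =>
        cnt (2*n) 1 r = n - 2 ∧ cnt (2*n) 2 r = n)).card : ℂ)
        * L (fun i => ![w,a,h] (pat n i)) := by
    rw [hP0, Finset.sum_congr rfl (fun r hr => by
      obtain ⟨_, h1, h2⟩ := Finset.mem_filter.mp hr
      exact hsymm r h1 h2), Finset.sum_const, nsmul_eq_mul]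
  have hcard_ne : ((univ.filter (fun r : Fin (2*n) → Fin 3 =>
      cnt (2*n) 1 r = n - 2 ∧ cnt (2*n) 2 r = n)).card : ℂ) ≠ 0 := by
    rw [Nat.cast_ne_zero]
    exact Finset.card_ne_zero_of_mem hmem
  have hzero : L (fun i => ![w,a,h] (pat n i)) = 0 := by
    have h' := hPconst
    rw [hPQ, hQ0] at h'
    exact (mul_eq_zero.mp h'.symm).resolve_left hcard_ne
  have efin : (fun i : Fin (2*n) =>
      if (i : ℕ) < 2 then w else if (i : ℕ) < n then a else h) =
      fun i => ![w,a,h] (pat n i) := by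
    funext i
    unfold pat
    split_ifs <;> simp
  rw [efin, hzero]
end

section
/- Let V be a finite-dimensional real vector space, L a symmetric 2n-multilinear form (n ≥ 2), q a symmetric bilinear form, and C > 0 with L(x,...,x) = C·q(x,x)^n for all x. Suppose d, h, a ∈ V satisfy q(h,h) = 0, q(d,h) = 0, q(d,a) > 0, and q(a,h) > 0. Then L(d, h, ..., h, a, ..., a) ≠ 0, where h appears n−1 times and a appears n times. -/
/-!
Expand `L (s • d + t • h + a, …)` by multilinearity into a sum over all ways `r` of filling the
`2n` slots with `d`, `h`, `a`; by symmetry each term depends only on how often each vector occurs.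
Since `q h h = q d h = 0`, the Fujiki relation turns the left side into
`C (q d d s² + 2 q d a s + 2 q a h t + q a a)ⁿ`, whose coefficient of `s tⁿ⁻¹` is
`C n (2 q d a) (2 q a h)ⁿ⁻¹ > 0`. On the left this coefficient is a sum of terms that are all equal
to the value in question, so that value cannot vanish.
-/

open Finset Polynomial

def fiberCard {κ ι : Type*} [Fintype κ] [DecidableEq ι] (r : κ → ι) (j : ι) : ℕ :=
  #{i | r i = j}

theorem sum_fiberCard {κ ι : Type*} [Fintype κ] [Fintype ι] [DecidableEq ι] (r : κ → ι) :
    ∑ j, fiberCard r j = Fintype.card κ :=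
  (card_eq_sum_card_fiberwise fun _ _ => mem_univ _).symm

theorem fiberCard_eq_of_fiberCard_zero_of_fiberCard_one {κ : Type*} [Fintype κ] {r r' : κ → Fin 3}
    (h₀ : fiberCard r 0 = fiberCard r' 0) (h₁ : fiberCard r 1 = fiberCard r' 1) :
    ∀ j, fiberCard r j = fiberCard r' j := by
  have h₂ : fiberCard r 2 = fiberCard r' 2 := by
    have := (sum_fiberCard r).trans (sum_fiberCard r').symm
    simp only [Fin.sum_univ_three] at this
    omega
  intro j
  fin_cases j <;> assumption

namespace MultilinearMap

variable {R V W κ ι : Type*} [CommSemiring R] [AddCommMonoid V] [Module R V]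
  [AddCommMonoid W] [Module R W] [Fintype κ] [DecidableEq ι]

theorem apply_comp_eq_of_fiberCard_eq (L : MultilinearMap R (fun _ : κ => V) W)
    (hL : ∀ (σ : Equiv.Perm κ) (v : κ → V), L (v ∘ σ) = L v) (w : ι → V) {r r' : κ → ι}
    (hrr' : ∀ j, fiberCard r j = fiberCard r' j) : L (w ∘ r) = L (w ∘ r') := by
  have e : ∀ j, {i // r' i = j} ≃ {i // r i = j} := fun j =>
    Fintype.equivOfCardEq <| by simpa only [Fintype.card_subtype, fiberCard] using (hrr' j).symm
  rw [← hL (Equiv.ofFiberEquiv e)]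
  exact congrArg L (funext fun i => congrArg w (Equiv.ofFiberEquiv_map e i))

theorem apply_const_sum_smul [DecidableEq κ] [Fintype ι] (L : MultilinearMap R (fun _ : κ => V) W)
    (c : ι → R) (w : ι → V) :
    L (fun _ => ∑ j, c j • w j) = ∑ r : κ → ι, (∏ j, c j ^ fiberCard r j) • L (w ∘ r) := by
  rw [L.map_sum (fun _ j => c j • w j)]
  refine sum_congr rfl fun r _ => ?_
  rw [L.map_smul_univ (fun i => c (r i)) (fun i => w (r i)), ← Fintype.prod_fiberwise' r c]
  simp only [prod_const, card_univ, Fintype.card_subtype, fiberCard]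
  rfl

end MultilinearMap

namespace Polynomial

variable {R : Type*}

theorem coeff_one_pow [CommSemiring R] (p : R[X]) (n : ℕ) :
    (p ^ n).coeff 1 = n * p.coeff 1 * p.coeff 0 ^ (n - 1) := by
  rw [← coeff_coe, coe_pow, PowerSeries.coeff_one_pow, coeff_coe, constantCoeff_coe]

theorem sum_filter_eq_coeff_of_forall_eval [CommRing R] [IsDomain R] [Infinite R] {ι : Type*}
    (S : Finset ι) (f : ι → R) (e : ι → ℕ) (p : R[X])
    (h : ∀ x, ∑ i ∈ S, f i * x ^ e i = p.eval x) (k : ℕ) :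
    ∑ i ∈ S with e i = k, f i = p.coeff k := by
  have hp : ∑ i ∈ S, C (f i) * X ^ e i = p := funext fun x => by simp [eval_finsetSum, h]
  rw [← hp, finsetSum_coeff, sum_filter]
  simp [coeff_C_mul, coeff_X_pow, eq_comm]

end Polynomial

theorem sum_filter_eq_of_forall_eq_mul_quadratic_pow {R ι : Type*} [CommRing R] [IsDomain R]
    [Infinite R] (S : Finset ι) (f : ι → R) (e g : ι → ℕ) (c A B D E : R) (n : ℕ)
    (h : ∀ s t, ∑ i ∈ S, f i * s ^ e i * t ^ g i = c * (A * s ^ 2 + B * s + (D * t + E)) ^ n) :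
    ∑ i ∈ S with e i = 1 ∧ g i = n - 1, f i = c * n * B * D ^ (n - 1) := by
  have h₁ : ∀ t, ∑ i ∈ S with e i = 1, f i * t ^ g i =
      (C (c * n * B) * (C D * X + C E) ^ (n - 1)).eval t := by
    intro t
    have hcoeff₀ : (C A * X ^ 2 + C B * X + C (D * t + E)).coeff 0 = D * t + E := by simp
    have hcoeff₁ : (C A * X ^ 2 + C B * X + C (D * t + E)).coeff 1 = B := by simp [coeff_X_pow]
    rw [sum_filter_eq_coeff_of_forall_eval S _ e
      (C c * (C A * X ^ 2 + C B * X + C (D * t + E)) ^ n) (fun s => ?_) 1]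
    · rw [coeff_C_mul, coeff_one_pow, hcoeff₀, hcoeff₁]
      simp only [eval_mul, eval_pow, eval_add, eval_C, eval_X]
      ring
    · simp only [eval_mul, eval_pow, eval_add, eval_C, eval_X, ← h s t]
      exact sum_congr rfl fun i _ => by ring
  have hdeg : (C D * X + C E).natDegree ≤ 1 := by compute_degree
  have hlead := coeff_pow_of_natDegree_le (m := n - 1) hdeg
  rw [mul_one] at hlead
  rw [← filter_filter, sum_filter_eq_coeff_of_forall_eval _ f g _ h₁ (n - 1), coeff_C_mul, hlead]
  simp

def blockPattern (m n : ℕ) (i : Fin m) : Fin 3 :=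
  if (i : ℕ) = 0 then 0 else if (i : ℕ) < n then 1 else 2

section

variable {m n : ℕ}

theorem blockPattern_eq_zero_iff (i : Fin m) : blockPattern m n i = 0 ↔ (i : ℕ) = 0 := by
  unfold blockPattern; split_ifs <;> simp_all

theorem blockPattern_eq_one_iff (i : Fin m) :
    blockPattern m n i = 1 ↔ (i : ℕ) ≠ 0 ∧ (i : ℕ) < n := by
  unfold blockPattern; split_ifs <;> simp_all

theorem fiberCard_blockPattern_zero (hm : 0 < m) : fiberCard (blockPattern m n) 0 = 1 := by
  rw [fiberCard, card_eq_one]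
  refine ⟨⟨0, hm⟩, ?_⟩
  ext i
  simp only [mem_filter, mem_univ, true_and, blockPattern_eq_zero_iff, mem_singleton]
  exact (Fin.ext_iff (b := ⟨0, hm⟩)).symm

theorem fiberCard_blockPattern_one (hnm : n ≤ m) : fiberCard (blockPattern m n) 1 = n - 1 := by
  rw [fiberCard, ← card_map Fin.valEmbedding, ← Nat.card_Ico 1 n]
  congr 1
  ext x
  simp only [mem_map, mem_filter, mem_univ, true_and, blockPattern_eq_one_iff, mem_Ico,
    Fin.valEmbedding_apply]
  exact ⟨fun ⟨i, hi, hix⟩ => by omega, fun hx => ⟨⟨x, by omega⟩, by dsimp only; omega, rfl⟩⟩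
end

theorem LinearMap.apply_smul_add_smul_add_self {R V : Type*} [CommRing R] [AddCommGroup V]
    [Module R V] (q : V →ₗ[R] V →ₗ[R] R) (hq : ∀ x y, q x y = q y x) {d h : V}
    (hhh : q h h = 0) (hdh : q d h = 0) (a : V) (s t : R) :
    q (s • d + t • h + a) (s • d + t • h + a) =
      q d d * s ^ 2 + 2 * q d a * s + (2 * q a h * t + q a a) := by
  simp only [map_add, map_smul, LinearMap.add_apply, LinearMap.smul_apply, smul_eq_mul]
  rw [hq h d, hq a d, hq h a, hhh, hdh]
  ring

theorem stmt14_general {V : Type*} [AddCommGroup V] [Module ℝ V]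
    (n : ℕ) (hn : 2 ≤ n)
    (L : MultilinearMap ℝ (fun _ : Fin (2*n) => V) ℝ)
    (hLsymm : ∀ (σ : Equiv.Perm (Fin (2*n))) (v : Fin (2*n) → V), L (v ∘ σ) = L v)
    (q : V →ₗ[ℝ] V →ₗ[ℝ] ℝ) (hqsymm : ∀ x y, q x y = q y x)
    (C : ℝ) (hC : 0 < C)
    (hFujiki : ∀ x : V, L (fun _ => x) = C * (q x x)^n)
    (d h a : V) (hhh : q h h = 0) (hdh : q d h = 0)
    (hda : 0 < q d a) (hah : 0 < q a h) :
    L (fun i => if (i : ℕ) = 0 then d else if (i : ℕ) < n then h else a) ≠ 0 := by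
  set w : Fin 3 → V := ![d, h, a]
  set r₀ := blockPattern (2 * n) n
  have htarget : (fun i : Fin (2 * n) => if (i : ℕ) = 0 then d else if (i : ℕ) < n then h else a)
      = w ∘ r₀ := by
    funext i
    simp only [Function.comp_apply, r₀, blockPattern]
    split_ifs <;> rfl
  have hexpand : ∀ s t : ℝ, ∑ r : Fin (2 * n) → Fin 3,
      L (w ∘ r) * s ^ fiberCard r 0 * t ^ fiberCard r 1 =
        C * (q d d * s ^ 2 + 2 * q d a * s + (2 * q a h * t + q a a)) ^ n := by
    intro s t
    have hx : s • d + t • h + a = ∑ j, ![s, t, 1] j • w j := by simp [Fin.sum_univ_three, w]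
    rw [← q.apply_smul_add_smul_add_self hqsymm hhh hdh, ← hFujiki, hx, L.apply_const_sum_smul]
    refine sum_congr rfl fun r _ => ?_
    simp only [Fin.prod_univ_three, Matrix.cons_val_zero, Matrix.cons_val_one, Matrix.cons_val,
      one_pow, mul_one, smul_eq_mul]
    ring
  have hcoeff := sum_filter_eq_of_forall_eq_mul_quadratic_pow _ _ _ _ _ _ _ _ _ _ hexpand
  have hterm : ∀ r ∈ ({r | fiberCard r 0 = 1 ∧ fiberCard r 1 = n - 1} :
      Finset (Fin (2 * n) → Fin 3)), L (w ∘ r) = L (w ∘ r₀) := by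
    intro r hr
    rw [mem_filter] at hr
    refine L.apply_comp_eq_of_fiberCard_eq hLsymm w
      (fiberCard_eq_of_fiberCard_zero_of_fiberCard_one ?_ ?_)
    · rw [hr.2.1, fiberCard_blockPattern_zero (by omega)]
    · rw [hr.2.2, fiberCard_blockPattern_one (by omega)]
  rw [htarget]
  intro hzero
  rw [sum_eq_zero fun r hr => (hterm r hr).trans hzero] at hcoeff
  have : 0 < C * n * (2 * q d a) * (2 * q a h) ^ (n - 1) := by
    have : (0 : ℝ) < n := Nat.cast_pos.mpr (by omega)
    positivity
  linarith

/-- the s t^{n-1} coefficient is nonzero (Step 5 contradiction). -/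
theorem stmt14 {V : Type*} [AddCommGroup V] [Module ℝ V] [FiniteDimensional ℝ V]
    (n : ℕ) (hn : 2 ≤ n)
    (L : MultilinearMap ℝ (fun _ : Fin (2*n) => V) ℝ)
    (hLsymm : ∀ (σ : Equiv.Perm (Fin (2*n))) (v : Fin (2*n) → V), L (v ∘ σ) = L v)
    (q : V →ₗ[ℝ] V →ₗ[ℝ] ℝ) (hqsymm : ∀ x y, q x y = q y x)
    (C : ℝ) (hC : 0 < C)
    (hFujiki : ∀ x : V, L (fun _ => x) = C * (q x x)^n)
    (d h a : V) (hhh : q h h = 0) (hdh : q d h = 0)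
    (hda : 0 < q d a) (hah : 0 < q a h) :
    L (fun i => if (i : ℕ) = 0 then d else if (i : ℕ) < n then h else a) ≠ 0 :=
  stmt14_general n hn L hLsymm q hqsymm C hC hFujiki d h a hhh hdh hda hah
end
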